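/- arXiv:1704.05306 — 10 statements merged into one kernel-verified Lean document; each statement's English description precedes it below -/
import Mathlib

section
/- Fix (x,t) ∈ ℝ × ℝ and n ≥ 1. Let Q, R : ℝ × ℝ → Matrix (Fin n) (Fin n) ℂ and set W = fromBlocks 0 Q R 0 (a 2n × 2n matrix-valued function) and Σ₃ = fromBlocks 1 0 0 (-1). Assume x ↦ W(x,t) is twice differentiable at x and t ↦ W(x,t) is differentiable at t. For k ∈ ℂ define U(k) = -i k • Σ₃ + W and V(k) = -2 i k² • Σ₃ + 2 k • W - i • (∂ₓW) * Σ₃ - i • W² * Σ₃. Then the zero-curvature condition ∂ₜU(k) - ∂ₓV(k) + U(k) * V(k) - V(k) * U(k) = 0 holds at (x,t) for every k ∈ ℂ if and only if the matrix AKNS equations hold at (x,t): i • ∂ₜQ + ∂ₓ²Q - 2 • Q * R * Q = 0 and -i • ∂ₜR + ∂ₓ²R - 2 • R * Q * R = 0. -/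
/-!
`Σ₃` squares to the identity and anticommutes with every off-diagonal block matrix, in particular
with `W` and `∂ₓW`. Expanding `[U(k), V(k)]` with these two rules, every term carrying a power of
`k` cancels against `∂ₓV(k)`, and the zero-curvature expression collapses to
`∂ₜW + i (∂ₓ²W - 2 W³) Σ₃`, independently of `k`. Its diagonal blocks vanish and its off-diagonal
blocks are `-i` and `i` times the two AKNS expressions.
-/

open Matrix Complex

attribute [local instance] Matrix.normedAddCommGroup Matrix.normedSpace

section MatrixCalculus

variable {𝕜 𝔸 : Type*} [NontriviallyNormedField 𝕜] {x : 𝕜}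

theorem hasDerivAt_matrix_iff [NormedAddCommGroup 𝔸] [NormedSpace 𝕜 𝔸] {l m : Type*} [Fintype m]
    {f : 𝕜 → Matrix l m 𝔸} {f' : Matrix l m 𝔸} :
    HasDerivAt f f' x ↔ ∀ i j, HasDerivAt (fun y => f y i j) (f' i j) x :=
  hasDerivAt_pi.trans (forall_congr' fun _ => hasDerivAt_pi)

theorem HasDerivAt.matrix_mul [NormedRing 𝔸] [NormedAlgebra 𝕜 𝔸] {l m p : Type*} [Fintype m]
    [Fintype p] {f : 𝕜 → Matrix l m 𝔸} {g : 𝕜 → Matrix m p 𝔸} {f' : Matrix l m 𝔸}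
    {g' : Matrix m p 𝔸} (hf : HasDerivAt f f' x) (hg : HasDerivAt g g' x) :
    HasDerivAt (fun y => f y * g y) (f' * g x + f x * g') x := by
  rw [hasDerivAt_matrix_iff] at hf hg ⊢
  intro i j
  simpa only [mul_apply, Matrix.add_apply, Finset.sum_add_distrib] using
    HasDerivAt.fun_sum fun k _ => (hf i k).fun_mul (hg k j)

theorem HasDerivAt.matrix_mul_const [NormedRing 𝔸] [NormedAlgebra 𝕜 𝔸] {l m p : Type*} [Fintype m]
    [Fintype p] {f : 𝕜 → Matrix l m 𝔸} {f' : Matrix l m 𝔸} (hf : HasDerivAt f f' x)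
    (c : Matrix m p 𝔸) :
    HasDerivAt (fun y => f y * c) (f' * c) x := by
  simpa using hf.matrix_mul (hasDerivAt_const x c)

theorem HasDerivAt.matrix_fromBlocks [NormedAddCommGroup 𝔸] [NormedSpace 𝕜 𝔸] {l l' m m' : Type*}
    [Fintype m] [Fintype m'] {A : 𝕜 → Matrix l m 𝔸} {B : 𝕜 → Matrix l m' 𝔸} {C : 𝕜 → Matrix l' m 𝔸}
    {D : 𝕜 → Matrix l' m' 𝔸} {A' : Matrix l m 𝔸} {B' : Matrix l m' 𝔸} {C' : Matrix l' m 𝔸}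
    {D' : Matrix l' m' 𝔸} (hA : HasDerivAt A A' x) (hB : HasDerivAt B B' x)
    (hC : HasDerivAt C C' x) (hD : HasDerivAt D D' x) :
    HasDerivAt (fun y => fromBlocks (A y) (B y) (C y) (D y)) (fromBlocks A' B' C' D') x := by
  rw [hasDerivAt_matrix_iff] at hA hB hC hD ⊢
  rintro (i | i) (j | j)
  exacts [hA i j, hB i j, hC i j, hD i j]

theorem HasDerivAt.matrix_fromBlocks_offDiag [NormedAddCommGroup 𝔸] [NormedSpace 𝕜 𝔸]
    {l m : Type*} [Fintype l] [Fintype m] {B : 𝕜 → Matrix l m 𝔸} {C : 𝕜 → Matrix m l 𝔸}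
    {B' : Matrix l m 𝔸} {C' : Matrix m l 𝔸} (hB : HasDerivAt B B' x) (hC : HasDerivAt C C' x) :
    HasDerivAt (fun y => fromBlocks 0 (B y) (C y) 0) (fromBlocks 0 B' C' 0) x :=
  (hasDerivAt_const x 0).matrix_fromBlocks hB hC (hasDerivAt_const x 0)

end MatrixCalculus

section AKNSLaxPair

variable {A : Type*} [Ring A] [Algebra ℂ A]

def aknsU (σ w : A) (k : ℂ) : A :=
  -(I * k) • σ + w

def aknsV (σ w wx : A) (k : ℂ) : A :=
  -(2 * I * k ^ 2) • σ + (2 * k) • w - I • (wx * σ) - I • (w * w * σ)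

theorem curvature_aknsU_aknsV {σ w wx : A} (hσ : σ * σ = 1) (hσw : σ * w = -(w * σ))
    (hσwx : σ * wx = -(wx * σ)) (k : ℂ) (wxx wt : A) :
    wt - ((2 * k) • wx - I • (wxx * σ) - I • ((wx * w + w * wx) * σ))
      + aknsU σ w k * aknsV σ w wx k - aknsV σ w wx k * aknsU σ w k
      = wt + I • ((wxx - (2 : ℂ) • (w * w * w)) * σ) := by
  have hσw' (a : A) : σ * (w * a) = -(w * (σ * a)) := by
    rw [← mul_assoc, hσw, neg_mul, mul_assoc]
  have hσwx' (a : A) : σ * (wx * a) = -(wx * (σ * a)) := by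
    rw [← mul_assoc, hσwx, neg_mul, mul_assoc]
  simp only [aknsU, aknsV, mul_add, add_mul, mul_sub, sub_mul, smul_mul_assoc, mul_smul_comm,
    mul_assoc, mul_neg, hσ, hσw, hσw', hσwx', smul_neg, neg_neg, mul_one]
  match_scalars <;> ring_nf
  simp [I_sq]

end AKNSLaxPair

theorem HasDerivAt.aknsV {l : Type*} [Fintype l] [DecidableEq l] {w wx : ℝ → Matrix l l ℂ}
    {wxx : Matrix l l ℂ} {x : ℝ} (hw : HasDerivAt w (wx x) x) (hwx : HasDerivAt wx wxx x)
    (σ : Matrix l l ℂ) (k : ℂ) :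
    HasDerivAt (fun y => aknsV σ (w y) (wx y) k)
      ((2 * k) • wx x - I • (wxx * σ) - I • ((wx x * w x + w x * wx x) * σ)) x :=
  ((((hasDerivAt_const x (-(2 * I * k ^ 2) • σ)).fun_add (hw.fun_const_smul (2 * k))).fun_sub
    ((hwx.matrix_mul_const σ).fun_const_smul I)).fun_sub
    (((hw.matrix_mul hw).matrix_mul_const σ).fun_const_smul I)).congr_deriv (by rw [zero_add])

theorem Matrix.fromBlocks_eq_zero_iff {l m n o α : Type*} [Zero α] {A : Matrix n l α}
    {B : Matrix n m α} {C : Matrix o l α} {D : Matrix o m α} :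
    fromBlocks A B C D = 0 ↔ A = 0 ∧ B = 0 ∧ C = 0 ∧ D = 0 := by
  rw [← fromBlocks_zero, fromBlocks_inj]

section Blocks

variable {n : Type*} [Fintype n] [DecidableEq n]

theorem fromBlocks_one_neg_one_mul_self :
    (fromBlocks 1 0 0 (-1) : Matrix (n ⊕ n) (n ⊕ n) ℂ) * fromBlocks 1 0 0 (-1) = 1 := by
  simp [fromBlocks_multiply, fromBlocks_one]

theorem fromBlocks_one_neg_one_mul_offDiag (Q R : Matrix n n ℂ) :
    fromBlocks 1 0 0 (-1) * fromBlocks 0 Q R 0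
      = -(fromBlocks 0 Q R 0 * fromBlocks (1 : Matrix n n ℂ) 0 0 (-1)) := by
  simp [fromBlocks_multiply, fromBlocks_neg]

theorem offDiag_add_smul_sub_cube_mul (Qt Rt Qxx Rxx Q R : Matrix n n ℂ) :
    fromBlocks 0 Qt Rt 0 + I • ((fromBlocks 0 Qxx Rxx 0
        - (2 : ℂ) • (fromBlocks 0 Q R 0 * fromBlocks 0 Q R 0 * fromBlocks 0 Q R 0))
        * fromBlocks 1 0 0 (-1))
      = fromBlocks 0 ((-I) • (I • Qt + Qxx - (2 : ℂ) • (Q * R * Q)))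
          (I • ((-I) • Rt + Rxx - (2 : ℂ) • (R * Q * R))) 0 := by
  simp only [sub_eq_add_neg, fromBlocks_multiply, fromBlocks_smul, fromBlocks_neg, fromBlocks_add,
    fromBlocks_inj, mul_zero, zero_add, zero_mul, add_zero, smul_zero, neg_zero, mul_one, mul_neg,
    neg_add_rev, neg_neg, smul_add, smul_neg, neg_smul, and_true, true_and]
  constructor <;> match_scalars <;> ring_nf <;> simp [I_sq]

theorem curvature_aknsU_aknsV_fromBlocks (Q R Qx Rx Qxx Rxx Qt Rt : Matrix n n ℂ) (k : ℂ) :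
    let σ := fromBlocks 1 0 0 (-1)
    let w := fromBlocks 0 Q R 0
    let wx := fromBlocks 0 Qx Rx 0
    fromBlocks 0 Qt Rt 0
        - ((2 * k) • wx - I • (fromBlocks 0 Qxx Rxx 0 * σ) - I • ((wx * w + w * wx) * σ))
        + aknsU σ w k * aknsV σ w wx k - aknsV σ w wx k * aknsU σ w k
      = fromBlocks 0 ((-I) • (I • Qt + Qxx - (2 : ℂ) • (Q * R * Q)))
          (I • ((-I) • Rt + Rxx - (2 : ℂ) • (R * Q * R))) 0 := by
  intro σ w wx
  rw [curvature_aknsU_aknsV fromBlocks_one_neg_one_mul_self (fromBlocks_one_neg_one_mul_offDiag Q R)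
    (fromBlocks_one_neg_one_mul_offDiag Qx Rx), offDiag_add_smul_sub_cube_mul]

end Blocks

theorem akns_zero_curvature_iff_general
    (n : ℕ)
    (Q R : ℝ × ℝ → Matrix (Fin n) (Fin n) ℂ)
    (x t : ℝ)
    -- twice differentiability in x (first derivative exists everywhere in x,
    -- and is itself differentiable at x), differentiability in t at t
    (hQx : ∀ y : ℝ, DifferentiableAt ℝ (fun s => Q (s, t)) y)
    (hRx : ∀ y : ℝ, DifferentiableAt ℝ (fun s => R (s, t)) y)
    (hQxx : DifferentiableAt ℝ (deriv fun s => Q (s, t)) x)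
    (hRxx : DifferentiableAt ℝ (deriv fun s => R (s, t)) x)
    (hQt : DifferentiableAt ℝ (fun τ => Q (x, τ)) t)
    (hRt : DifferentiableAt ℝ (fun τ => R (x, τ)) t)
    -- the Lax pair data
    (S3 : Matrix (Fin n ⊕ Fin n) (Fin n ⊕ Fin n) ℂ)
    (hS3 : S3 = fromBlocks 1 0 0 (-1))
    (W : ℝ → ℝ → Matrix (Fin n ⊕ Fin n) (Fin n ⊕ Fin n) ℂ)
    (hW : ∀ s τ : ℝ, W s τ = fromBlocks 0 (Q (s, τ)) (R (s, τ)) 0)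
    (U V : ℂ → ℝ → ℝ → Matrix (Fin n ⊕ Fin n) (Fin n ⊕ Fin n) ℂ)
    (hU : ∀ (k : ℂ) (s τ : ℝ), U k s τ = (-(I * k)) • S3 + W s τ)
    (hV : ∀ (k : ℂ) (s τ : ℝ), V k s τ =
      (-(2 * I * k ^ 2)) • S3 + (2 * k) • W s τ
        - I • (deriv (fun s' => W s' τ) s * S3) - I • (W s τ * W s τ * S3)) :
    (∀ k : ℂ,
      deriv (fun τ => U k x τ) t - deriv (fun s => V k s t) x
        + U k x t * V k x t - V k x t * U k x t = 0)
    ↔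
    (I • deriv (fun τ => Q (x, τ)) t + deriv (deriv fun s => Q (s, t)) x
        - (2 : ℂ) • (Q (x, t) * R (x, t) * Q (x, t)) = 0
      ∧ (-I) • deriv (fun τ => R (x, τ)) t + deriv (deriv fun s => R (s, t)) x
        - (2 : ℂ) • (R (x, t) * Q (x, t) * R (x, t)) = 0) := by
  set Qx := deriv fun s => Q (s, t)
  set Rx := deriv fun s => R (s, t)
  set Wx := deriv fun s => W s t
  set Qt := deriv (fun τ => Q (x, τ)) t
  set Rt := deriv (fun τ => R (x, τ)) t
  have hWx (s : ℝ) : HasDerivAt (fun s => W s t) (fromBlocks 0 (Qx s) (Rx s) 0) s := by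
    simp only [hW]
    exact (hQx s).hasDerivAt.matrix_fromBlocks_offDiag (hRx s).hasDerivAt
  have hWx_eq : Wx = fun s => fromBlocks 0 (Qx s) (Rx s) 0 := funext fun s => (hWx s).deriv
  have hWxx : HasDerivAt Wx (fromBlocks 0 (deriv Qx x) (deriv Rx x) 0) x := by
    rw [hWx_eq]
    exact hQxx.hasDerivAt.matrix_fromBlocks_offDiag hRxx.hasDerivAt
  have hUt (k : ℂ) : deriv (fun τ => U k x τ) t = fromBlocks 0 Qt Rt 0 := by
    simp only [hU, hW]
    exact ((hQt.hasDerivAt.matrix_fromBlocks_offDiag hRt.hasDerivAt).const_add _).deriv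
  have hVx (k : ℂ) : deriv (fun s => V k s t) x = (2 * k) • Wx x
      - I • (fromBlocks 0 (deriv Qx x) (deriv Rx x) 0 * S3)
      - I • ((Wx x * W x t + W x t * Wx x) * S3) := by
    simp only [hV]
    exact ((hWx x).differentiableAt.hasDerivAt.aknsV hWxx S3 k).deriv
  have hcurv (k : ℂ) : deriv (fun τ => U k x τ) t - deriv (fun s => V k s t) x
        + U k x t * V k x t - V k x t * U k x t
      = fromBlocks 0
          ((-I) • (I • Qt + deriv Qx x - (2 : ℂ) • (Q (x, t) * R (x, t) * Q (x, t))))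
          (I • ((-I) • Rt + deriv Rx x - (2 : ℂ) • (R (x, t) * Q (x, t) * R (x, t)))) 0 := by
    rw [hUt, hVx, show U k x t = aknsU S3 (W x t) k from hU k x t,
      show V k x t = aknsV S3 (W x t) (Wx x) k from hV k x t, hWx_eq, hW, hS3]
    exact curvature_aknsU_aknsV_fromBlocks _ _ _ _ _ _ _ _ k
  simp only [hcurv, Matrix.fromBlocks_eq_zero_iff, smul_eq_zero, neg_eq_zero, I_ne_zero,
    false_or, true_and, and_true, forall_const]

/-- Zero-curvature condition for the 2n×2n AKNS Lax pair is equivalent to the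
matrix AKNS equations, at a fixed point (x,t). -/
theorem akns_zero_curvature_iff
    (n : ℕ) (hn : 1 ≤ n)
    (Q R : ℝ × ℝ → Matrix (Fin n) (Fin n) ℂ)
    (x t : ℝ)
    -- twice differentiability in x (first derivative exists everywhere in x,
    -- and is itself differentiable at x), differentiability in t at t
    (hQx : ∀ y : ℝ, DifferentiableAt ℝ (fun s => Q (s, t)) y)
    (hRx : ∀ y : ℝ, DifferentiableAt ℝ (fun s => R (s, t)) y)
    (hQxx : DifferentiableAt ℝ (deriv fun s => Q (s, t)) x)
    (hRxx : DifferentiableAt ℝ (deriv fun s => R (s, t)) x)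
    (hQt : DifferentiableAt ℝ (fun τ => Q (x, τ)) t)
    (hRt : DifferentiableAt ℝ (fun τ => R (x, τ)) t)
    -- the Lax pair data
    (S3 : Matrix (Fin n ⊕ Fin n) (Fin n ⊕ Fin n) ℂ)
    (hS3 : S3 = fromBlocks 1 0 0 (-1))
    (W : ℝ → ℝ → Matrix (Fin n ⊕ Fin n) (Fin n ⊕ Fin n) ℂ)
    (hW : ∀ s τ : ℝ, W s τ = fromBlocks 0 (Q (s, τ)) (R (s, τ)) 0)
    (U V : ℂ → ℝ → ℝ → Matrix (Fin n ⊕ Fin n) (Fin n ⊕ Fin n) ℂ)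
    (hU : ∀ (k : ℂ) (s τ : ℝ), U k s τ = (-(I * k)) • S3 + W s τ)
    (hV : ∀ (k : ℂ) (s τ : ℝ), V k s τ =
      (-(2 * I * k ^ 2)) • S3 + (2 * k) • W s τ
        - I • (deriv (fun s' => W s' τ) s * S3) - I • (W s τ * W s τ * S3)) :
    (∀ k : ℂ,
      deriv (fun τ => U k x τ) t - deriv (fun s => V k s t) x
        + U k x t * V k x t - V k x t * U k x t = 0)
    ↔
    (I • deriv (fun τ => Q (x, τ)) t + deriv (deriv fun s => Q (s, t)) x
        - (2 : ℂ) • (Q (x, t) * R (x, t) * Q (x, t)) = 0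
      ∧ (-I) • deriv (fun τ => R (x, τ)) t + deriv (deriv fun s => R (s, t)) x
        - (2 : ℂ) • (R (x, t) * Q (x, t) * R (x, t)) = 0) :=
  akns_zero_curvature_iff_general n Q R x t hQx hRx hQxx hRxx hQt hRt S3 hS3 W hW U V hU hV
end

section
/- Let θ ∈ ℝ, μ ∈ ℂ, and let B be an invertible 2 × 2 complex matrix satisfying: Bᴴ = exp(iθ) • B, B * σ₃ = σ₃ * B, and B * σ = μ • (σ * B). Then μ = 1 or μ = -1, and there exists a nonzero real number ρ such that B = (exp(-iθ/2) * ρ) • !![1, 0; 0, μ]. -/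
/-!
Commuting with σ₃ kills the off-diagonal entries, so B = diag(a, d). Then B σ = μ σ B reads
a = μ d and d = μ a, and invertibility gives a ≠ 0, hence μ² = 1 and d = μ a. Finally the
(0,0) entry of Bᴴ = e^{iθ} B says conj a = e^{iθ} a, i.e. e^{iθ/2} a is real.
-/

open Matrix Complex ComplexConjugate

theorem fin_two_eq_diag_of_mul_comm_diag_one_neg_one {R : Type*} [Ring R] [NoZeroDivisors R]
    [NeZero (2 : R)] {B : Matrix (Fin 2) (Fin 2) R}
    (h : B * !![(1 : R), 0; 0, -1] = !![(1 : R), 0; 0, -1] * B) :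
    B = !![B 0 0, 0; 0, B 1 1] := by
  have h01 := congrFun (congrFun h 0) 1
  have h10 := congrFun (congrFun h 1) 0
  simp only [Matrix.mul_apply, Fin.sum_univ_two, of_apply, cons_val', cons_val_zero, cons_val_one,
    empty_val', cons_val_fin_one, mul_one, mul_zero, add_zero, zero_add, one_mul, zero_mul,
    mul_neg, neg_mul] at h01 h10
  have h01' : (2 : R) * B 0 1 = 0 := by rw [two_mul]; nth_rw 1 [← h01]; exact neg_add_cancel _
  have h10' : (2 : R) * B 1 0 = 0 := by rw [two_mul]; nth_rw 2 [h10]; exact add_neg_cancel _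
  nth_rw 1 [eta_fin_two B]
  rw [(mul_eq_zero.1 h01').resolve_left two_ne_zero, (mul_eq_zero.1 h10').resolve_left two_ne_zero]

theorem diag_entries_eq_mul_of_mul_swap_eq_smul {R : Type*} [CommRing R] {a d μ : R}
    (h : !![a, 0; 0, d] * !![(0 : R), 1; 1, 0] = μ • (!![(0 : R), 1; 1, 0] * !![a, 0; 0, d])) :
    a = μ * d ∧ d = μ * a :=
  ⟨by simpa using congrFun (congrFun h 0) 1, by simpa using congrFun (congrFun h 1) 0⟩

theorem exists_real_eq_exp_neg_half_mul_of_conj_eq (θ : ℝ) {z : ℂ}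
    (h : conj z = exp (θ * I) * z) : ∃ ρ : ℝ, z = exp (-(θ / 2 : ℝ) * I) * ρ := by
  set w := exp ((θ / 2 : ℝ) * I)
  have hw : exp (-(θ / 2 : ℝ) * I) * w = 1 := by
    rw [← Complex.exp_add, ← Complex.exp_zero]; ring_nf
  have hconj : conj (w * z) = w * z := by
    have hw' : conj w = exp (-(θ / 2 : ℝ) * I) := by
      rw [← Complex.exp_conj, map_mul, conj_ofReal, conj_I, neg_mul, mul_neg]
    have hθ : exp (θ * I) = w * w := by
      rw [← Complex.exp_add]; push_cast; ring_nf
    rw [map_mul, hw', h, hθ]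
    linear_combination (w * z) * hw
  refine ⟨(w * z).re, ?_⟩
  rw [conj_eq_iff_re.1 hconj, ← mul_assoc, hw, one_mul]

/-- Classification of the Z₂ reduction matrix, case γ = 1: an invertible 2×2
matrix B with Bᴴ = e^{iθ} B, commuting with σ₃, and with B σ = μ σ B, has
μ = ±1 and the form B = e^{-iθ/2} ρ · diag(1, μ) with ρ a nonzero real. -/
theorem reduction_matrix_classification_diagonal
    (θ : ℝ) (μ : ℂ)
    (B : Matrix (Fin 2) (Fin 2) ℂ) (hB : IsUnit B)
    (h1 : Bᴴ = Complex.exp (θ * I) • B)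
    (h2 : B * !![(1 : ℂ), 0; 0, -1] = !![(1 : ℂ), 0; 0, -1] * B)
    (h3 : B * !![(0 : ℂ), 1; 1, 0] = μ • (!![(0 : ℂ), 1; 1, 0] * B)) :
    (μ = 1 ∨ μ = -1) ∧
      ∃ ρ : ℝ, ρ ≠ 0 ∧ B = (Complex.exp (-(θ / 2 : ℝ) * I) * (ρ : ℂ)) • !![(1 : ℂ), 0; 0, μ] := by
  have hphase : conj (B 0 0) = exp (θ * I) * B 0 0 := by
    simpa using congrFun (congrFun h1 0) 0
  rw [fin_two_eq_diag_of_mul_comm_diag_one_neg_one h2] at hB h3 ⊢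
  obtain ⟨had, hda⟩ := diag_entries_eq_mul_of_mul_swap_eq_smul h3
  have ha : B 0 0 ≠ 0 := by
    have hdet := ((isUnit_iff_isUnit_det _).1 hB).ne_zero
    rw [det_fin_two_of] at hdet
    rintro h
    simp [h] at hdet
  have hμ : μ * μ = 1 := mul_right_cancel₀ ha (by linear_combination -μ * hda - had)
  obtain ⟨ρ, hρ⟩ := exists_real_eq_exp_neg_half_mul_of_conj_eq θ hphase
  refine ⟨mul_self_eq_one_iff.1 hμ, ρ, ?_, ?_⟩
  · rintro rfl
    simp [hρ] at ha
  · rw [hda, hρ]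
    ext i j
    fin_cases i <;> fin_cases j <;> simp [mul_comm]
end

section
/- Let θ ∈ ℝ, μ ∈ ℂ, and let B be an invertible 2 × 2 complex matrix satisfying: Bᴴ = exp(iθ) • B, B * σ₃ = - σ₃ * B, and B * σ = μ • (σ * B). Then μ = 1 or μ = -1, and there exists a nonzero β ∈ ℂ such that B = (exp(-iθ/2) * β) • !![0, 1; μ, 0], where β is real if μ = 1 and β is purely imaginary if μ = -1. -/
/-!
Anticommuting with `σ₃` kills the diagonal, so `B = !![0, b; c, 0]`, and `B σ = μ σ B` reads
`b = μ c`, `c = μ b`. Invertibility gives `b ≠ 0`, hence `μ² = 1`. The phase condition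
`conj c = e^{iθ} b` says that `β = e^{iθ/2} b` satisfies `conj β = μ β`, i.e. `β` is real or purely
imaginary according to the sign of `μ`.
-/

open Matrix Complex
open ComplexConjugate

namespace Matrix

variable {R : Type*}

theorem mul_pauliZ_eq_neg_pauliZ_mul_iff [Ring R] [NoZeroDivisors R] [CharZero R] {a b c d : R} :
    !![a, b; c, d] * !![(1 : R), 0; 0, -1] = -(!![(1 : R), 0; 0, -1] * !![a, b; c, d]) ↔
      a = 0 ∧ d = 0 := by
  simp [CharZero.eq_neg_self_iff, CharZero.neg_eq_self_iff]

theorem antidiagonal_mul_pauliX_eq_smul_iff [CommRing R] {b c μ : R} :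
    !![0, b; c, 0] * !![(0 : R), 1; 1, 0] = μ • (!![(0 : R), 1; 1, 0] * !![0, b; c, 0]) ↔
      b = μ * c ∧ c = μ * b := by
  simp

theorem isUnit_antidiagonal_iff [CommRing R] {b c : R} :
    IsUnit !![0, b; c, 0] ↔ IsUnit b ∧ IsUnit c := by
  simp [isUnit_iff_isUnit_det, det_fin_two_of]

end Matrix

namespace Complex

theorem conj_exp_ofReal_mul_I (x : ℝ) : conj (exp (x * I)) = exp (-x * I) := by
  rw [← exp_conj, map_mul, conj_ofReal, conj_I]
  ring_nf

theorem conj_exp_half_mul_of_conj_eq {θ : ℝ} {b c : ℂ} (h : conj c = exp (θ * I) * b) :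
    conj (exp ((θ / 2 : ℝ) * I) * b) = exp ((θ / 2 : ℝ) * I) * c := by
  have hb : conj b = exp (θ * I) * c := by
    have h' := congrArg conj h
    rw [conj_conj, map_mul, conj_exp_ofReal_mul_I] at h'
    rw [h', ← mul_assoc, ← exp_add]
    simp
  rw [map_mul, hb, conj_exp_ofReal_mul_I, ← mul_assoc, ← exp_add]
  congr 2
  push_cast
  ring

end Complex

/-- Classification of the Z₂ reduction matrix, case γ = -1: an invertible 2×2
matrix B with Bᴴ = e^{iθ} B, anticommuting with σ₃, and with B σ = μ σ B, has
μ = ±1 and the form B = e^{-iθ/2} β · !![0,1;μ,0] with β nonzero, real if μ = 1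
and purely imaginary if μ = -1. -/
theorem reduction_matrix_classification_antidiagonal
    (θ : ℝ) (μ : ℂ)
    (B : Matrix (Fin 2) (Fin 2) ℂ) (hB : IsUnit B)
    (h1 : Bᴴ = Complex.exp (θ * I) • B)
    (h2 : B * !![(1 : ℂ), 0; 0, -1] = -(!![(1 : ℂ), 0; 0, -1] * B))
    (h3 : B * !![(0 : ℂ), 1; 1, 0] = μ • (!![(0 : ℂ), 1; 1, 0] * B)) :
    (μ = 1 ∨ μ = -1) ∧
      ∃ β : ℂ, β ≠ 0 ∧ B = (Complex.exp (-(θ / 2 : ℝ) * I) * β) • !![(0 : ℂ), 1; μ, 0]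
        ∧ (μ = 1 → β.im = 0) ∧ (μ = -1 → β.re = 0) := by
  obtain ⟨a, b, c, d, rfl⟩ : ∃ a b c d, B = !![a, b; c, d] := ⟨_, _, _, _, eta_fin_two B⟩
  obtain ⟨rfl, rfl⟩ := mul_pauliZ_eq_neg_pauliZ_mul_iff.mp h2
  obtain ⟨hbc, hcb⟩ := antidiagonal_mul_pauliX_eq_smul_iff.mp h3
  have hb : b ≠ 0 := (isUnit_antidiagonal_iff.mp hB).1.ne_zero
  have hμ : μ = 1 ∨ μ = -1 :=
    mul_self_eq_one_iff.mp (mul_right_cancel₀ hb (by linear_combination -hbc - μ * hcb))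
  have hphase : conj c = exp (θ * I) * b := by simpa using congrFun₂ h1 0 1
  set β := exp ((θ / 2 : ℝ) * I) * b with hβ_def
  have hβ : conj β = μ * β := by
    rw [conj_exp_half_mul_of_conj_eq hphase, hcb]
    ring
  have hβb : exp (-(θ / 2 : ℝ) * I) * β = b := by
    rw [hβ_def, ← mul_assoc, ← exp_add]
    simp
  refine ⟨hμ, β, mul_ne_zero (exp_ne_zero _) hb, ?_, fun h => ?_, fun h => ?_⟩
  · rw [hβb, hcb]
    ext i j
    fin_cases i <;> fin_cases j <;> simp [mul_comm]
  · exact conj_eq_iff_im.mp (by rw [hβ, h, one_mul])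
  · have hre := congrArg re hβ
    simp only [conj_re, h, neg_one_mul, neg_re] at hre
    linarith
end

section
/- Let c ∈ ℝ and q : ℝ → ℝ → ℂ. Assume: for every t > 0 the function x ↦ q(x,t) is twice differentiable on ℝ and x ↦ ∂ₓ²q(x,t) is continuous; for every x ∈ ℝ the function t ↦ q(x,t) is differentiable on (0,∞); for every t > 0 the function x ↦ ∂ₜq(x,t) is continuous. For x ≥ 0, t > 0 define the diagonal 2 × 2 matrices Q(x,t) = !![q(x,t), 0; 0, q(-x,t)] and R(x,t) = c • !![conj(q(x,t)), 0; 0, conj(q(-x,t))]. Assume that for all x > 0 and t > 0: i • ∂ₜQ(x,t) + ∂ₓ²Q(x,t) - 2 • Q(x,t) * R(x,t) * Q(x,t) = 0, where ∂ₜ is the derivative of t ↦ Q(x,t) and ∂ₓ² the second derivative of x ↦ Q(x,t). Then for all x ∈ ℝ and all t > 0: i • ∂ₜq(x,t) + ∂ₓ²q(x,t) - 2c • q(x,t) * conj(q(x,t)) * q(x,t) = 0, i.e. q solves the (local) nonlinear Schrödinger equation on the whole line. -/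
/-!
With `Q = diag(q(x,t), q(-x,t))` and `R = c · conj Q`, every term of the matrix AKNS equation is
diagonal, and the sign produced by the chain rule for `x ↦ q(-x,t)` cancels in the second
`x`-derivative. So the `(1,1)` entry is the NLS equation at `x` and the `(2,2)` entry the NLS
equation at `-x`; for `x > 0` this covers all of `ℝ ∖ {0}`, and the NLS residual is continuous in
`x`, so it also vanishes at `0`.
-/

open Matrix Complex

attribute [local instance] Matrix.normedAddCommGroup Matrix.normedSpace

theorem Matrix.vec2_diagonal_eq_zero_iff {α : Type*} [Zero α] {a b : α} :
    !![a, 0; 0, b] = 0 ↔ a = 0 ∧ b = 0 := by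
  simp [← Matrix.ext_iff, Fin.forall_fin_two]

theorem Matrix.vec2_diagonal_mul_smul_mul {α : Type*} [CommSemiring α] (c a b a' b' : α) :
    !![a, 0; 0, b] * (c • !![a', 0; 0, b']) * !![a, 0; 0, b]
      = !![c * (a * a' * a), 0; 0, c * (b * b' * b)] := by
  ext i j
  fin_cases i <;> fin_cases j <;> simp [Matrix.mul_apply, Fin.sum_univ_two] <;> ring

theorem hasDerivAt_vec2_diagonal {f g : ℝ → ℂ} {f' g' : ℂ} {x : ℝ}
    (hf : HasDerivAt f f' x) (hg : HasDerivAt g g' x) :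
    HasDerivAt (fun s => !![f s, 0; 0, g s]) !![f', 0; 0, g'] x := by
  refine hasDerivAt_pi.2 fun i => hasDerivAt_pi.2 fun j => ?_
  fin_cases i <;> fin_cases j
  · exact hf
  · exact hasDerivAt_const _ _
  · exact hasDerivAt_const _ _
  · exact hg

theorem deriv_vec2_diagonal {f g : ℝ → ℂ} {x : ℝ}
    (hf : DifferentiableAt ℝ f x) (hg : DifferentiableAt ℝ g x) :
    deriv (fun s => !![f s, 0; 0, g s]) x = !![deriv f x, 0; 0, deriv g x] :=
  (hasDerivAt_vec2_diagonal hf.hasDerivAt hg.hasDerivAt).deriv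

theorem deriv_deriv_vec2_diagonal_comp_neg {f : ℝ → ℂ} (hf : Differentiable ℝ f)
    (hf' : Differentiable ℝ (deriv f)) (x : ℝ) :
    deriv (deriv fun s => !![f s, 0; 0, f (-s)]) x
      = !![deriv (deriv f) x, 0; 0, deriv (deriv f) (-x)] := by
  have hfirst : deriv (fun s => !![f s, 0; 0, f (-s)])
      = fun s => !![deriv f s, 0; 0, -deriv f (-s)] := by
    funext s
    rw [deriv_vec2_diagonal (hf s) (differentiableAt_comp_neg.2 (hf (-s))), deriv_comp_neg]
  rw [hfirst, deriv_vec2_diagonal (g := fun s => -deriv f (-s)) (hf' x)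
      (differentiableAt_comp_neg.2 (hf' (-x))).neg, deriv.fun_neg, deriv_comp_neg, neg_neg]

noncomputable def aknsResidual (Q R : ℝ → ℝ → Matrix (Fin 2) (Fin 2) ℂ) (x t : ℝ) :
    Matrix (Fin 2) (Fin 2) ℂ :=
  I • deriv (fun τ => Q x τ) t + deriv (deriv fun s => Q s t) x - (2 : ℂ) • (Q x t * R x t * Q x t)

noncomputable def nlsResidual (c : ℝ) (q : ℝ → ℝ → ℂ) (x t : ℝ) : ℂ :=
  I * deriv (fun τ => q x τ) t + deriv (deriv fun s => q s t) x
    - 2 * (c : ℂ) * (q x t * starRingEnd ℂ (q x t) * q x t)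

theorem aknsResidual_reflect (c : ℝ) {q : ℝ → ℝ → ℂ} {t : ℝ}
    (hx : Differentiable ℝ fun x => q x t) (hxx : Differentiable ℝ (deriv fun x => q x t))
    (ht : ∀ x, DifferentiableAt ℝ (fun τ => q x τ) t) (x : ℝ) :
    aknsResidual (fun x t => !![q x t, 0; 0, q (-x) t])
        (fun x t => (c : ℂ) • !![starRingEnd ℂ (q x t), 0; 0, starRingEnd ℂ (q (-x) t)]) x t
      = !![nlsResidual c q x t, 0; 0, nlsResidual c q (-x) t] := by
  rw [aknsResidual, deriv_vec2_diagonal (ht x) (ht (-x)), deriv_deriv_vec2_diagonal_comp_neg hx hxx,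
    Matrix.vec2_diagonal_mul_smul_mul]
  ext i j
  fin_cases i <;> fin_cases j <;> simp [nlsResidual] <;> ring

theorem continuous_nlsResidual {c : ℝ} {q : ℝ → ℝ → ℂ} {t : ℝ}
    (hq : Continuous fun x => q x t) (hqt : Continuous fun x => deriv (fun τ => q x τ) t)
    (hqxx : Continuous (deriv (deriv fun x => q x t))) :
    Continuous fun x => nlsResidual c q x t := by
  unfold nlsResidual
  fun_prop

/-- The γ = 1 reduction of the matrix AKNS half-line problem yields the local
NLS equation on the whole line. -/
theorem local_nls_from_matrix_reduction
    (c : ℝ) (q : ℝ → ℝ → ℂ)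
    -- regularity in x : twice differentiable with continuous second derivative
    (hx1 : ∀ t : ℝ, 0 < t → Differentiable ℝ (fun x => q x t))
    (hx2 : ∀ t : ℝ, 0 < t → Differentiable ℝ (deriv fun x => q x t))
    (hx3 : ∀ t : ℝ, 0 < t → Continuous (deriv (deriv fun x => q x t)))
    -- regularity in t
    (ht1 : ∀ x : ℝ, ∀ t : ℝ, 0 < t → DifferentiableAt ℝ (fun τ => q x τ) t)
    (ht2 : ∀ t : ℝ, 0 < t → Continuous (fun x => deriv (fun τ => q x τ) t))
    -- the reduced matrix data
    (Q R : ℝ → ℝ → Matrix (Fin 2) (Fin 2) ℂ)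
    (hQ : ∀ x t : ℝ, Q x t = !![q x t, 0; 0, q (-x) t])
    (hR : ∀ x t : ℝ, R x t = (c : ℂ) • !![starRingEnd ℂ (q x t), 0; 0, starRingEnd ℂ (q (-x) t)])
    -- the reduced matrix AKNS equation on the half-line
    (hmat : ∀ x : ℝ, 0 < x → ∀ t : ℝ, 0 < t →
      I • deriv (fun τ => Q x τ) t + deriv (deriv fun s => Q s t) x
        - (2 : ℂ) • (Q x t * R x t * Q x t) = 0) :
    -- conclusion : the local NLS equation on the whole line
    ∀ x : ℝ, ∀ t : ℝ, 0 < t →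
      I * deriv (fun τ => q x τ) t + deriv (deriv fun s => q s t) x
        - 2 * (c : ℂ) * (q x t * starRingEnd ℂ (q x t) * q x t) = 0 := by
  intro x t ht
  have hhalf : ∀ y, 0 < y → nlsResidual c q y t = 0 ∧ nlsResidual c q (-y) t = 0 := by
    intro y hy
    have h : aknsResidual Q R y t = 0 := hmat y hy t ht
    rwa [funext₂ hQ, funext₂ hR, aknsResidual_reflect c (hx1 t ht) (hx2 t ht) (ht1 · t ht),
      Matrix.vec2_diagonal_eq_zero_iff] at h
  have hpunctured : ∀ y, y ≠ 0 → nlsResidual c q y t = 0 := by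
    intro y hy
    rcases hy.lt_or_gt with hneg | hpos
    · simpa using (hhalf (-y) (neg_pos.2 hneg)).2
    · exact (hhalf y hpos).1
  have hcont := continuous_nlsResidual (c := c) (hx1 t ht).continuous (ht2 t ht) (hx3 t ht)
  exact congrFun (hcont.ext_on (dense_compl_singleton 0) continuous_const hpunctured) x
end

section
/- Let G₀, G₁, H₀, H₁ be 2 × 2 complex matrices. Define the 4 × 4 matrices W₀ = fromBlocks 0 G₀ H₀ 0, W₁ = fromBlocks 0 G₁ H₁ 0, Σ₃ = fromBlocks 1 0 0 (-1), and for k ∈ ℂ set P(k) = 2k • W₀ - i • (W₁ * Σ₃) - i • (W₀ * W₀ * Σ₃). Suppose K is a 4 × 4 complex matrix such that for every k ∈ ℂ: (-2 i k² • Σ₃ + P(-k)) * K = K * (-2 i k² • Σ₃ + P(k)). Then there exist 2 × 2 complex matrices K₁, K₄ with K = fromBlocks K₁ 0 0 K₄, and the boundary relations hold: G₀ * K₄ = - K₁ * G₀, H₀ * K₁ = - K₄ * H₀, G₁ * K₄ = K₁ * G₁, and H₁ * K₁ = K₄ * H₁. -/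
/-!
Expanding the intertwining relation gives a polynomial identity in `k` of degree two; its
coefficients say that `K` commutes with `Σ₃`, anticommutes with `W₀`, and commutes with
`W₁ Σ₃ + W₀² Σ₃`. Anticommuting with `W₀` makes `K` commute with `W₀²`, so `K` commutes with
`W₁ Σ₃`, hence with `W₁` since `Σ₃² = 1`. Commuting with `Σ₃` forces `K` to be block diagonal,
and the relations with the off-diagonal `W₀`, `W₁`, read blockwise, are the boundary relations.
-/

open Matrix Complex

theorem eq_zero_of_forall_sq_smul_add_smul_add_eq_zero {𝕜 M : Type*} [Field 𝕜] [NeZero (2 : 𝕜)]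
    [AddCommGroup M] [Module 𝕜 M] {A B C : M} (h : ∀ k : 𝕜, k ^ 2 • A + k • B + C = 0) :
    A = 0 ∧ B = 0 ∧ C = 0 := by
  have hC : C = 0 := by simpa using h 0
  have hplus : A + B = 0 := by simpa [hC] using h 1
  have hminus : A - B = 0 := by simpa [hC, sub_eq_add_neg] using h (-1)
  have hA : A = 0 := by
    rw [← smul_eq_zero_iff_right (two_ne_zero (α := 𝕜))]
    linear_combination (norm := module) hplus + hminus
  exact ⟨hA, by simpa [hA] using hplus, hC⟩

theorem commute_mul_self_of_mul_eq_neg {R : Type*} [Ring R] {W K : R} (h : W * K = -(K * W)) :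
    Commute (W * W) K := by
  have hsemi : SemiconjBy K W (-W) := by
    rw [SemiconjBy, neg_mul, h, neg_neg]
  have hsq := hsemi.mul_right hsemi
  rw [neg_mul_neg] at hsq
  exact Commute.symm hsq

theorem Commute.of_mul_right_of_mul_self_eq_one {M : Type*} [Monoid M] {K W S : M}
    (hS : S * S = 1) (hKS : Commute K S) (hKWS : Commute K (W * S)) : Commute K W := by
  simpa [mul_assoc, hS] using hKWS.mul_right hKS

namespace Matrix

variable {l m n o p q α : Type*}

theorem fromBlocks_one_zero_zero_neg_one_mul_self [Fintype m] [Fintype n] [DecidableEq m]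
    [DecidableEq n] [Ring α] :
    (fromBlocks 1 0 0 (-1) : Matrix (m ⊕ n) (m ⊕ n) α) * fromBlocks 1 0 0 (-1) = 1 := by
  simp [fromBlocks_multiply, ← fromBlocks_one]

theorem fromBlocks_zero_zero_mul_fromBlocks_zero_zero [Fintype m] [Fintype n]
    [NonUnitalNonAssocSemiring α]
    (B : Matrix l n α) (C : Matrix o m α) (D₁ : Matrix m p α) (D₄ : Matrix n q α) :
    fromBlocks 0 B C 0 * fromBlocks D₁ 0 0 D₄ = fromBlocks 0 (B * D₄) (C * D₁) 0 := by
  simp [fromBlocks_multiply]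

theorem fromBlocks_mul_fromBlocks_zero_zero [Fintype m] [Fintype n] [NonUnitalNonAssocSemiring α]
    (D₁ : Matrix l m α) (D₄ : Matrix o n α) (B : Matrix m q α) (C : Matrix n p α) :
    fromBlocks D₁ 0 0 D₄ * fromBlocks 0 B C 0 = fromBlocks 0 (D₁ * B) (D₄ * C) 0 := by
  simp [fromBlocks_multiply]

theorem exists_eq_fromBlocks_of_commute_fromBlocks_one_neg_one [Fintype m] [Fintype n]
    [DecidableEq m] [DecidableEq n] [Ring α] [IsAddTorsionFree α] {K : Matrix (m ⊕ n) (m ⊕ n) α}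
    (h : Commute (fromBlocks 1 0 0 (-1)) K) : ∃ K₁ K₄, K = fromBlocks K₁ 0 0 K₄ := by
  obtain ⟨K₁, K₂, K₃, K₄, rfl⟩ : ∃ K₁ K₂ K₃ K₄, K = fromBlocks K₁ K₂ K₃ K₄ :=
    ⟨_, _, _, _, (fromBlocks_toBlocks K).symm⟩
  have hblocks : fromBlocks K₁ K₂ (-K₃) (-K₄) = fromBlocks K₁ (-K₂) K₃ (-K₄) := by
    simpa [Commute, SemiconjBy, fromBlocks_multiply] using h
  obtain ⟨-, h₂, h₃, -⟩ := fromBlocks_inj.mp hblocks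
  refine ⟨K₁, K₄, ?_⟩
  congr 1
  · ext i j
    exact self_eq_neg.mp (congrFun₂ h₂ i j)
  · ext i j
    exact neg_eq_self.mp (congrFun₂ h₃ i j)

end Matrix

/-- Classification of linearizable boundary conditions: a k-independent matrix K
intertwining the t-part of the Lax pair at k and -k is block diagonal and
imposes the boundary relations on G₀, G₁, H₀, H₁. -/
theorem linearizable_boundary_conditions
    (G₀ G₁ H₀ H₁ : Matrix (Fin 2) (Fin 2) ℂ)
    (W₀ W₁ S3 : Matrix (Fin 2 ⊕ Fin 2) (Fin 2 ⊕ Fin 2) ℂ)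
    (hW₀ : W₀ = fromBlocks 0 G₀ H₀ 0)
    (hW₁ : W₁ = fromBlocks 0 G₁ H₁ 0)
    (hS3 : S3 = fromBlocks 1 0 0 (-1))
    (P : ℂ → Matrix (Fin 2 ⊕ Fin 2) (Fin 2 ⊕ Fin 2) ℂ)
    (hP : ∀ k : ℂ, P k = (2 * k) • W₀ - I • (W₁ * S3) - I • (W₀ * W₀ * S3))
    (K : Matrix (Fin 2 ⊕ Fin 2) (Fin 2 ⊕ Fin 2) ℂ)
    (hK : ∀ k : ℂ,
      ((-(2 * I * k ^ 2)) • S3 + P (-k)) * K = K * ((-(2 * I * k ^ 2)) • S3 + P k)) :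
    ∃ K₁ K₄ : Matrix (Fin 2) (Fin 2) ℂ,
      K = fromBlocks K₁ 0 0 K₄
        ∧ G₀ * K₄ = -(K₁ * G₀)
        ∧ H₀ * K₁ = -(K₄ * H₀)
        ∧ G₁ * K₄ = K₁ * G₁
        ∧ H₁ * K₁ = K₄ * H₁ := by
  have hpoly : ∀ k : ℂ,
      k ^ 2 • ((-(2 * I)) • (S3 * K - K * S3)) + k • ((-2 : ℂ) • (W₀ * K + K * W₀))
      + (-I) • (W₁ * S3 * K - K * (W₁ * S3) + (W₀ * W₀ * S3 * K - K * (W₀ * W₀ * S3))) = 0 := by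
    intro k
    have h := hK k
    rw [hP, hP] at h
    simp only [add_mul, sub_mul, mul_add, mul_sub, smul_mul_assoc, mul_smul_comm] at h
    linear_combination (norm := module) h
  obtain ⟨hquad, hlin, hconst⟩ := eq_zero_of_forall_sq_smul_add_smul_add_eq_zero hpoly
  have hS3K : Commute S3 K := sub_eq_zero.mp ((smul_eq_zero_iff_right (by simp)).mp hquad)
  have hW₀K : W₀ * K = -(K * W₀) :=
    eq_neg_of_add_eq_zero_left ((smul_eq_zero_iff_right (by norm_num)).mp hlin)
  have hW₀W₀S3K : Commute K (W₀ * W₀ * S3) :=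
    (commute_mul_self_of_mul_eq_neg hW₀K).symm.mul_right hS3K.symm
  have hW₁S3K : Commute K (W₁ * S3) := by
    have hcomm := (smul_eq_zero_iff_right (neg_ne_zero.mpr I_ne_zero)).mp hconst
    rw [hW₀W₀S3K.eq, sub_self, add_zero, sub_eq_zero] at hcomm
    exact hcomm.symm
  have hW₁K : Commute K W₁ := Commute.of_mul_right_of_mul_self_eq_one
    (hS3 ▸ fromBlocks_one_zero_zero_neg_one_mul_self) hS3K.symm hW₁S3K
  subst hW₀ hW₁ hS3
  obtain ⟨K₁, K₄, rfl⟩ := exists_eq_fromBlocks_of_commute_fromBlocks_one_neg_one hS3K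
  rw [fromBlocks_zero_zero_mul_fromBlocks_zero_zero, fromBlocks_mul_fromBlocks_zero_zero,
    fromBlocks_neg, neg_zero] at hW₀K
  obtain ⟨-, hG₀, hH₀, -⟩ := fromBlocks_inj.mp hW₀K
  rw [Commute, SemiconjBy, fromBlocks_mul_fromBlocks_zero_zero,
    fromBlocks_zero_zero_mul_fromBlocks_zero_zero] at hW₁K
  obtain ⟨-, hG₁, hH₁, -⟩ := fromBlocks_inj.mp hW₁K
  exact ⟨K₁, K₄, rfl, hG₀, hH₀, hG₁.symm, hH₁.symm⟩
end

section
/- Let γ, γ̃, Γ, Γ̃ be diagonal 2 × 2 complex matrices (so all of them pairwise commute) and let u be a nonzero complex number. Define the 4 × 4 matrices J₁ = fromBlocks 1 0 (u • Γ) 1, J₃ = fromBlocks 1 (-(u⁻¹) • Γ̃) 0 1, and J₄ = fromBlocks 1 (-(u⁻¹) • γ) (u • γ̃) (1 - γ * γ̃). Then J₄ is invertible with J₄⁻¹ = fromBlocks (1 - γ * γ̃) ((u⁻¹) • γ) (-(u) • γ̃) 1, the product J₂ := J₃ * J₄⁻¹ * J₁ is invertible, and J₂⁻¹ = fromBlocks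 1 (-(u⁻¹) • (γ - Γ̃)) (u • (γ̃ - Γ)) (1 - (γ̃ - Γ) * (γ - Γ̃)). -/
/-!
Write `K(a, c) = fromBlocks (1 - a * c) (u⁻¹ • a) (-(u • c)) 1`. For arbitrary square blocks
`a`, `c`, the matrix `fromBlocks 1 (-(u⁻¹ • a)) (u • c) (1 - c * a)` is an inverse of `K(a, c)`,
and since `γ γ̃ = γ̃ γ` this matrix is `J₄`. Multiplying `K(a, c)` on the left by `J₃` replaces `a`
by `a - Γ̃`, and on the right by `J₁` replaces `c` by `c - Γ`, so `J₂ = K(γ - Γ̃, γ̃ - Γ)`.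
-/

open Matrix

theorem Matrix.IsDiag.commute {n α : Type*} [Fintype n] [DecidableEq n] [CommSemiring α]
    {A B : Matrix n n α} (hA : A.IsDiag) (hB : B.IsDiag) : Commute A B := by
  rw [← hA.diagonal_diag, ← hB.diagonal_diag]
  exact commute_diagonal _ _

section

variable {m 𝕜 : Type*} [Fintype m] [DecidableEq m] [Field 𝕜] {u : 𝕜}

theorem fromBlocks_mul_fromBlocks_eq_one (hu : u ≠ 0) (a c : Matrix m m 𝕜) :
    fromBlocks 1 (-(u⁻¹ • a)) (u • c) (1 - c * a)
      * fromBlocks (1 - a * c) (u⁻¹ • a) (-(u • c)) 1 = 1 := by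
  rw [fromBlocks_multiply, ← fromBlocks_one]
  congr 1 <;> simp only [Matrix.mul_sub, Matrix.sub_mul, mul_neg, neg_mul, smul_neg, mul_smul_comm,
    smul_mul_assoc, smul_smul, inv_mul_cancel₀ hu, mul_inv_cancel₀ hu, one_smul, one_mul, mul_one,
    Matrix.mul_assoc] <;> module

theorem fromBlocks_upper_unipotent_mul (hu : u ≠ 0) (a c d : Matrix m m 𝕜) :
    fromBlocks 1 (-(u⁻¹ • d)) 0 1 * fromBlocks (1 - a * c) (u⁻¹ • a) (-(u • c)) 1
      = fromBlocks (1 - (a - d) * c) (u⁻¹ • (a - d)) (-(u • c)) 1 := by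
  rw [fromBlocks_multiply]
  congr 1 <;> simp only [Matrix.sub_mul, mul_neg, neg_mul, smul_neg, mul_smul_comm,
    smul_mul_assoc, smul_smul, mul_inv_cancel₀ hu, one_smul, one_mul, mul_one, zero_mul] <;> module

theorem fromBlocks_mul_lower_unipotent (hu : u ≠ 0) (a b c : Matrix m m 𝕜) :
    fromBlocks (1 - a * c) (u⁻¹ • a) (-(u • c)) 1 * fromBlocks 1 0 (u • b) 1
      = fromBlocks (1 - a * (c - b)) (u⁻¹ • a) (-(u • (c - b))) 1 := by
  rw [fromBlocks_multiply]
  congr 1 <;> simp only [Matrix.mul_sub, mul_smul_comm, smul_mul_assoc, smul_smul,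
    mul_inv_cancel₀ hu, one_smul, one_mul, mul_one, mul_zero] <;> module

end

theorem jump_matrix_inverses_general
    (γ γt Γ Γt : Matrix (Fin 2) (Fin 2) ℂ)
    (hγ : γ.IsDiag) (hγt : γt.IsDiag)
    (u : ℂ) (hu : u ≠ 0)
    (J₁ J₃ J₄ : Matrix (Fin 2 ⊕ Fin 2) (Fin 2 ⊕ Fin 2) ℂ)
    (hJ₁ : J₁ = fromBlocks 1 0 (u • Γ) 1)
    (hJ₃ : J₃ = fromBlocks 1 (-(u⁻¹ • Γt)) 0 1)
    (hJ₄ : J₄ = fromBlocks 1 (-(u⁻¹ • γ)) (u • γt) (1 - γ * γt)) :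
    IsUnit J₄
      ∧ J₄⁻¹ = fromBlocks (1 - γ * γt) (u⁻¹ • γ) (-(u • γt)) 1
      ∧ IsUnit (J₃ * J₄⁻¹ * J₁)
      ∧ (J₃ * J₄⁻¹ * J₁)⁻¹
          = fromBlocks 1 (-(u⁻¹ • (γ - Γt))) (u • (γt - Γ)) (1 - (γt - Γ) * (γ - Γt)) := by
  have hJ₄_mul : J₄ * fromBlocks (1 - γ * γt) (u⁻¹ • γ) (-(u • γt)) 1 = 1 := by
    simpa only [hJ₄, (hγ.commute hγt).eq] using fromBlocks_mul_fromBlocks_eq_one hu γ γt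
  have hJ₄_inv := inv_eq_right_inv hJ₄_mul
  have hJ₂ : J₃ * J₄⁻¹ * J₁
      = fromBlocks (1 - (γ - Γt) * (γt - Γ)) (u⁻¹ • (γ - Γt)) (-(u • (γt - Γ))) 1 := by
    rw [hJ₄_inv, hJ₃, hJ₁, fromBlocks_upper_unipotent_mul hu, fromBlocks_mul_lower_unipotent hu]
  have hJ₂_inv_mul := fromBlocks_mul_fromBlocks_eq_one hu (γ - Γt) (γt - Γ)
  rw [← hJ₂] at hJ₂_inv_mul
  exact ⟨.of_mul_eq_one _ hJ₄_mul, hJ₄_inv, .of_mul_eq_one_right _ hJ₂_inv_mul,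
    inv_eq_left_inv hJ₂_inv_mul⟩

/-- Explicit inverses of the jump matrices J₄ and J₂ = J₃ J₄⁻¹ J₁ of the matrix
Riemann–Hilbert problem of the unified transform. -/
theorem jump_matrix_inverses
    (γ γt Γ Γt : Matrix (Fin 2) (Fin 2) ℂ)
    (hγ : γ.IsDiag) (hγt : γt.IsDiag) (hΓ : Γ.IsDiag) (hΓt : Γt.IsDiag)
    (u : ℂ) (hu : u ≠ 0)
    (J₁ J₃ J₄ : Matrix (Fin 2 ⊕ Fin 2) (Fin 2 ⊕ Fin 2) ℂ)
    (hJ₁ : J₁ = fromBlocks 1 0 (u • Γ) 1)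
    (hJ₃ : J₃ = fromBlocks 1 (-(u⁻¹ • Γt)) 0 1)
    (hJ₄ : J₄ = fromBlocks 1 (-(u⁻¹ • γ)) (u • γt) (1 - γ * γt)) :
    IsUnit J₄
      ∧ J₄⁻¹ = fromBlocks (1 - γ * γt) (u⁻¹ • γ) (-(u • γt)) 1
      ∧ IsUnit (J₃ * J₄⁻¹ * J₁)
      ∧ (J₃ * J₄⁻¹ * J₁)⁻¹
          = fromBlocks 1 (-(u⁻¹ • (γ - Γt))) (u • (γt - Γ)) (1 - (γt - Γ) * (γ - Γt)) :=
  jump_matrix_inverses_general γ γt Γ Γt hγ hγt u hu J₁ J₃ J₄ hJ₁ hJ₃ hJ₄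
end

section
/- Let a, ã, b, b̃, a', ã', b', b̃', Ã, B̃ be diagonal 2 × 2 complex matrices (so all of them pairwise commute) and let σ = !![0,1;1,0]. Assume: b̃ * b = ã * a - 1; Ã, a, ã' are invertible; d := a * Ã - b * B̃ is invertible; a * (σ * ã' * σ) + b * (σ * b̃' * σ) is invertible; and the symmetry B̃ * Ã⁻¹ = - σ * b̃' * ã'⁻¹ * σ holds. Define γ̃ = b̃ * a⁻¹ and Γ = B̃ * a⁻¹ * d⁻¹. Then γ̃ - Γ = (b̃ * (σ * ã' * σ) + ã * (σ * b̃' * σ)) * (a * (σ * ã' * σ) + b * (σ * b̃' * σ))⁻¹. -/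
/-!
All matrices involved are diagonal, and conjugation by `σ` keeps them diagonal (it swaps the two
entries), so the identity holds entrywise and reduces to a scalar one. Writing
`d = a Ã - b B̃` and `s = a α + b β` with `α, β` the `σ`-conjugates of `ã', b̃'`, the determinant
relation gives `b̃ d - B̃ = a (b̃ Ã - ã B̃)`, so `γ̃ - Γ = (b̃ Ã - ã B̃) / d`; the symmetry
`B̃ α = -β Ã` then makes `(b̃ Ã - ã B̃, d)` proportional to `(b̃ α + ã β, s)`.
-/

open Matrix

theorem gamma_tilde_sub_Gamma_of_field {K : Type*} [Field K] {a ta b tb α β A B : K}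
    (hdet : tb * b = ta * a - 1) (hA : A ≠ 0) (ha : a ≠ 0) (hα : α ≠ 0)
    (hd : a * A - b * B ≠ 0) (hs : a * α + b * β ≠ 0) (hsym : B * A⁻¹ = -(β * α⁻¹)) :
    tb * a⁻¹ - B * a⁻¹ * (a * A - b * B)⁻¹ = (tb * α + ta * β) * (a * α + b * β)⁻¹ := by
  have hB : B * α + β * A = 0 := by
    field_simp at hsym
    linear_combination hsym
  calc tb * a⁻¹ - B * a⁻¹ * (a * A - b * B)⁻¹ = (tb * A - ta * B) * (a * A - b * B)⁻¹ := by
        generalize hd_def : a * A - b * B = d at hd ⊢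
        field_simp
        linear_combination (-B) * hdet - tb * hd_def
    _ = (tb * α + ta * β) * (a * α + b * β)⁻¹ := by
        rw [← div_eq_mul_inv, ← div_eq_mul_inv, div_eq_div_iff hd hs]
        linear_combination (tb * b - ta * a) * hB

namespace Matrix

theorem inv_diagonal_of_ne_zero {n K : Type*} [Fintype n] [DecidableEq n] [Field K]
    {v : n → K} (hv : ∀ i, v i ≠ 0) : (diagonal v)⁻¹ = diagonal fun i => (v i)⁻¹ :=
  inv_eq_right_inv <| by simp [hv]

theorem gamma_tilde_sub_Gamma_of_isDiag {n K : Type*} [Fintype n] [DecidableEq n] [Field K]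
    {a ta b tb α β A B : Matrix n n K}
    (ha : a.IsDiag) (hta : ta.IsDiag) (hb : b.IsDiag) (htb : tb.IsDiag)
    (hα : α.IsDiag) (hβ : β.IsDiag) (hA : A.IsDiag) (hB : B.IsDiag)
    (hdet : tb * b = ta * a - 1) (hAu : IsUnit A) (hau : IsUnit a) (hαu : IsUnit α)
    (hdu : IsUnit (a * A - b * B)) (hsu : IsUnit (a * α + b * β))
    (hsym : B * A⁻¹ = -(β * α⁻¹)) :
    tb * a⁻¹ - B * a⁻¹ * (a * A - b * B)⁻¹ = (tb * α + ta * β) * (a * α + b * β)⁻¹ := by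
  obtain ⟨va, rfl⟩ : ∃ v, a = diagonal v := ⟨_, ha.diagonal_diag.symm⟩
  obtain ⟨vta, rfl⟩ : ∃ v, ta = diagonal v := ⟨_, hta.diagonal_diag.symm⟩
  obtain ⟨vb, rfl⟩ : ∃ v, b = diagonal v := ⟨_, hb.diagonal_diag.symm⟩
  obtain ⟨vtb, rfl⟩ : ∃ v, tb = diagonal v := ⟨_, htb.diagonal_diag.symm⟩
  obtain ⟨vα, rfl⟩ : ∃ v, α = diagonal v := ⟨_, hα.diagonal_diag.symm⟩
  obtain ⟨vβ, rfl⟩ : ∃ v, β = diagonal v := ⟨_, hβ.diagonal_diag.symm⟩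
  obtain ⟨vA, rfl⟩ : ∃ v, A = diagonal v := ⟨_, hA.diagonal_diag.symm⟩
  obtain ⟨vB, rfl⟩ : ∃ v, B = diagonal v := ⟨_, hB.diagonal_diag.symm⟩
  rw [← diagonal_one] at hdet
  simp only [diagonal_mul_diagonal, diagonal_add, diagonal_sub, isUnit_diagonal, Pi.isUnit_iff,
    isUnit_iff_ne_zero] at hdet hAu hau hαu hdu hsu hsym ⊢
  simp only [inv_diagonal_of_ne_zero, hAu, hau, hαu, hdu, hsu, ne_eq, not_false_eq_true,
    implies_true, diagonal_mul_diagonal, diagonal_sub, diagonal_neg,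
    diagonal_eq_diagonal_iff] at hdet hsym ⊢
  exact fun i =>
    gamma_tilde_sub_Gamma_of_field (hdet i) (hAu i) (hau i) (hαu i) (hdu i) (hsu i) (hsym i)

theorem swap_mul_diagonal_mul_swap {R : Type*} [Semiring R] (v : Fin 2 → R) :
    !![0, 1; 1, 0] * diagonal v * !![0, 1; 1, 0] = diagonal fun i => v (Equiv.swap 0 1 i) := by
  ext i j
  fin_cases i <;> fin_cases j <;> simp [mul_apply, Fin.sum_univ_two, vecMul_diagonal]

theorem IsDiag.swap_mul_mul_swap {R : Type*} [Semiring R] {A : Matrix (Fin 2) (Fin 2) R}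
    (hA : A.IsDiag) : (!![0, 1; 1, 0] * A * !![0, 1; 1, 0]).IsDiag := by
  rw [← hA.diagonal_diag, swap_mul_diagonal_mul_swap]
  exact isDiag_diagonal _

theorem mul_mul_inv_mul_of_mul_self_eq_one {n R : Type*} [Fintype n] [DecidableEq n]
    [CommRing R] {S : Matrix n n R} (hS : S * S = 1) (X Y : Matrix n n R) :
    S * X * Y⁻¹ * S = S * X * S * (S * Y * S)⁻¹ := by
  rw [mul_inv_rev, mul_inv_rev, inv_eq_left_inv hS]
  simp only [Matrix.mul_assoc, ← Matrix.mul_assoc S S, hS, Matrix.one_mul]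

end Matrix

/-- `ta`, `tb` denote ã, b̃, primed letters denote evaluation at -k, and `tA`, `tB` denote Ã, B̃. -/
theorem gamma_tilde_sub_Gamma_initial_data_general
    (a ta b tb ta' tb' tA tB : Matrix (Fin 2) (Fin 2) ℂ)
    (ha : a.IsDiag) (hta : ta.IsDiag) (hb : b.IsDiag) (htb : tb.IsDiag)
    (hta' : ta'.IsDiag) (htb' : tb'.IsDiag)
    (htA : tA.IsDiag) (htB : tB.IsDiag)
    (sig : Matrix (Fin 2) (Fin 2) ℂ) (hsig : sig = !![0, 1; 1, 0])
    (hdet : tb * b = ta * a - 1)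
    (hAinv : IsUnit tA) (hainv : IsUnit a) (hta'inv : IsUnit ta')
    (hdinv : IsUnit (a * tA - b * tB))
    (hsum : IsUnit (a * (sig * ta' * sig) + b * (sig * tb' * sig)))
    (hsym : tB * tA⁻¹ = -(sig * tb' * ta'⁻¹ * sig)) :
    tb * a⁻¹ - tB * a⁻¹ * (a * tA - b * tB)⁻¹
      = (tb * (sig * ta' * sig) + ta * (sig * tb' * sig))
        * (a * (sig * ta' * sig) + b * (sig * tb' * sig))⁻¹ := by
  subst hsig
  have hσ : !![(0 : ℂ), 1; 1, 0] * !![0, 1; 1, 0] = 1 := by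
    ext i j
    fin_cases i <;> fin_cases j <;> simp
  have hσu : IsUnit !![(0 : ℂ), 1; 1, 0] := ⟨⟨_, _, hσ, hσ⟩, rfl⟩
  rw [mul_mul_inv_mul_of_mul_self_eq_one hσ] at hsym
  exact gamma_tilde_sub_Gamma_of_isDiag ha hta hb htb hta'.swap_mul_mul_swap
    htb'.swap_mul_mul_swap htA htB hdet hAinv hainv ((hσu.mul hta'inv).mul hσu) hdinv hsum hsym

/-- The jump datum γ̃ - Γ depends only on the initial data: identity from the
proof of the paper's main theorem. Here `ta`, `tb` denote ã, b̃, primed letters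
denote evaluation at -k, and `tA`, `tB` denote Ã, B̃. -/
theorem gamma_tilde_sub_Gamma_initial_data
    (a ta b tb a' ta' b' tb' tA tB : Matrix (Fin 2) (Fin 2) ℂ)
    (ha : a.IsDiag) (hta : ta.IsDiag) (hb : b.IsDiag) (htb : tb.IsDiag)
    (ha' : a'.IsDiag) (hta' : ta'.IsDiag) (hb' : b'.IsDiag) (htb' : tb'.IsDiag)
    (htA : tA.IsDiag) (htB : tB.IsDiag)
    (sig : Matrix (Fin 2) (Fin 2) ℂ) (hsig : sig = !![0, 1; 1, 0])
    (hdet : tb * b = ta * a - 1)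
    (hAinv : IsUnit tA) (hainv : IsUnit a) (hta'inv : IsUnit ta')
    (hdinv : IsUnit (a * tA - b * tB))
    (hsum : IsUnit (a * (sig * ta' * sig) + b * (sig * tb' * sig)))
    (hsym : tB * tA⁻¹ = -(sig * tb' * ta'⁻¹ * sig)) :
    tb * a⁻¹ - tB * a⁻¹ * (a * tA - b * tB)⁻¹
      = (tb * (sig * ta' * sig) + ta * (sig * tb' * sig))
        * (a * (sig * ta' * sig) + b * (sig * tb' * sig))⁻¹ :=
  gamma_tilde_sub_Gamma_initial_data_general a ta b tb ta' tb' tA tB ha hta hb htb hta' htb' htA htB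
    sig hsig hdet hAinv hainv hta'inv hdinv hsum hsym
end

section
/- Let a, b, ã', b̃', Ã, B̃ be diagonal 2 × 2 complex matrices (so all of them pairwise commute) and let σ = !![0,1;1,0]. Assume: Ã, a, ã' are invertible; d := a * Ã - b * B̃ is invertible; a * (σ * ã' * σ) + b * (σ * b̃' * σ) is invertible; and B̃ * Ã⁻¹ = - σ * b̃' * ã'⁻¹ * σ. Then Γ := B̃ * a⁻¹ * d⁻¹ satisfies Γ = - (σ * b̃' * σ) * a⁻¹ * (a * (σ * ã' * σ) + b * (σ * b̃' * σ))⁻¹. -/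
/-!
Diagonal matrices commute, so this is an identity in the commutative ring `n → R` of their
diagonals. There the symmetry relation reads `B̃ = -t s⁻¹ Ã` with `s = σ ã' σ`, `t = σ b̃' σ`,
whence `d = a Ã - b B̃ = (a s + b t) s⁻¹ Ã` and `Γ = B̃ a⁻¹ d⁻¹ = -t a⁻¹ (a s + b t)⁻¹`.
-/

open Matrix
open scoped Ring

theorem mul_inverse_mul_inverse_sub_eq_of_mul_inverse_eq {R : Type*} [CommRing R]
    {a b s t A B : R} (hA : IsUnit A) (hs : IsUnit s) (h : B * A⁻¹ʳ = -(t * s⁻¹ʳ)) :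
    B * a⁻¹ʳ * (a * A - b * B)⁻¹ʳ = -(t * a⁻¹ʳ * (a * s + b * t)⁻¹ʳ) := by
  have hB : B = -(t * s⁻¹ʳ * A) := by
    rw [← Ring.inverse_mul_cancel_right A B hA, h, neg_mul]
  have hd : a * A - b * B = (a * s + b * t) * (s⁻¹ʳ * A) := by
    rw [hB]
    linear_combination (-(a * A)) * Ring.mul_inverse_cancel s hs
  rw [hd, Ring.mul_inverse_rev, Ring.mul_inverse_rev, Ring.inverse_inverse hs, hB]
  linear_combination (-(t * a⁻¹ʳ * (a * s + b * t)⁻¹ʳ)) * Ring.inverse_mul_cancel s hs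
    + (-(t * a⁻¹ʳ * (a * s + b * t)⁻¹ʳ * s⁻¹ʳ * s)) * Ring.mul_inverse_cancel A hA

namespace Matrix

variable {n R : Type*} [Fintype n] [DecidableEq n] [CommRing R]

theorem IsDiag.mul_inv_mul_inv_sub_eq_of_mul_inv_eq {a b s t A B : Matrix n n R}
    (ha : a.IsDiag) (hb : b.IsDiag) (hs : s.IsDiag) (ht : t.IsDiag) (hA : A.IsDiag)
    (hB : B.IsDiag) (hA_unit : IsUnit A) (hs_unit : IsUnit s) (h : B * A⁻¹ = -(t * s⁻¹)) :
    B * a⁻¹ * (a * A - b * B)⁻¹ = -(t * a⁻¹ * (a * s + b * t)⁻¹) := by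
  obtain ⟨a, rfl⟩ : ∃ v, diagonal v = a := ⟨_, ha.diagonal_diag⟩
  obtain ⟨b, rfl⟩ : ∃ v, diagonal v = b := ⟨_, hb.diagonal_diag⟩
  obtain ⟨s, rfl⟩ : ∃ v, diagonal v = s := ⟨_, hs.diagonal_diag⟩
  obtain ⟨t, rfl⟩ : ∃ v, diagonal v = t := ⟨_, ht.diagonal_diag⟩
  obtain ⟨A, rfl⟩ : ∃ v, diagonal v = A := ⟨_, hA.diagonal_diag⟩
  obtain ⟨B, rfl⟩ : ∃ v, diagonal v = B := ⟨_, hB.diagonal_diag⟩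
  rw [isUnit_diagonal] at hA_unit hs_unit
  simp only [inv_diagonal, diagonal_mul_diagonal, diagonal_sub, diagonal_add, diagonal_neg] at h ⊢
  exact congrArg diagonal
    (mul_inverse_mul_inverse_sub_eq_of_mul_inverse_eq hA_unit hs_unit (diagonal_injective h))

theorem mul_mul_inv_mul_eq_of_mul_self_eq_one {σ M N : Matrix n n R} (hσ : σ * σ = 1) :
    σ * M * N⁻¹ * σ = (σ * M * σ) * (σ * N * σ)⁻¹ := by
  rw [mul_inv_rev, mul_inv_rev, inv_eq_left_inv hσ]
  simp only [mul_assoc]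
  simp [← mul_assoc, hσ]

theorem IsDiag.swap_mul_mul_swap_s13 {M : Matrix (Fin 2) (Fin 2) R} (hM : M.IsDiag) :
    (!![0, 1; 1, 0] * M * !![0, 1; 1, 0]).IsDiag := by
  convert isDiag_diagonal ![M 1 1, M 0 0] using 1
  rw [← hM.diagonal_diag, diagonal_fin_two, diagonal_fin_two, mul_fin_two, mul_fin_two]
  simp

end Matrix

theorem Gamma_initial_data_general
    (a b ta' tb' tA tB : Matrix (Fin 2) (Fin 2) ℂ)
    (ha : a.IsDiag) (hb : b.IsDiag)
    (hta' : ta'.IsDiag) (htb' : tb'.IsDiag)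
    (htA : tA.IsDiag) (htB : tB.IsDiag)
    (sig : Matrix (Fin 2) (Fin 2) ℂ) (hsig : sig = !![0, 1; 1, 0])
    (hAinv : IsUnit tA) (hta'inv : IsUnit ta')
    (hsym : tB * tA⁻¹ = -(sig * tb' * ta'⁻¹ * sig)) :
    tB * a⁻¹ * (a * tA - b * tB)⁻¹
      = -((sig * tb' * sig) * a⁻¹
          * (a * (sig * ta' * sig) + b * (sig * tb' * sig))⁻¹) := by
  have hsig_sq : sig * sig = 1 := by
    rw [hsig, mul_fin_two, one_fin_two]
    norm_num
  rw [mul_mul_inv_mul_eq_of_mul_self_eq_one hsig_sq] at hsym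
  have hsig_unit : IsUnit sig := IsUnit.of_mul_eq_one _ hsig_sq
  subst hsig
  exact ha.mul_inv_mul_inv_sub_eq_of_mul_inv_eq hb hta'.swap_mul_mul_swap_s13 htb'.swap_mul_mul_swap_s13
    htA htB hAinv ((hsig_unit.mul hta'inv).mul hsig_unit) hsym

/-- The jump datum Γ expressed in terms of initial data only: identity from the
proof of the paper's main theorem. Primed letters denote evaluation at -k, and
`tA`, `tB` denote Ã, B̃. -/
theorem Gamma_initial_data
    (a b ta' tb' tA tB : Matrix (Fin 2) (Fin 2) ℂ)
    (ha : a.IsDiag) (hb : b.IsDiag)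
    (hta' : ta'.IsDiag) (htb' : tb'.IsDiag)
    (htA : tA.IsDiag) (htB : tB.IsDiag)
    (sig : Matrix (Fin 2) (Fin 2) ℂ) (hsig : sig = !![0, 1; 1, 0])
    (hAinv : IsUnit tA) (hainv : IsUnit a) (hta'inv : IsUnit ta')
    (hdinv : IsUnit (a * tA - b * tB))
    (hsum : IsUnit (a * (sig * ta' * sig) + b * (sig * tb' * sig)))
    (hsym : tB * tA⁻¹ = -(sig * tb' * ta'⁻¹ * sig)) :
    tB * a⁻¹ * (a * tA - b * tB)⁻¹
      = -((sig * tb' * sig) * a⁻¹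
          * (a * (sig * ta' * sig) + b * (sig * tb' * sig))⁻¹) :=
  Gamma_initial_data_general a b ta' tb' tA tB ha hb hta' htb' htA htB sig hsig hAinv hta'inv hsym
end

section
/- Let n ≥ 1. Let Σ be an n × n complex matrix with Σ * Σ = 1 and Σᴴ = Σ, let B be an invertible n × n complex matrix with Bᴴ = b • B for some nonzero b ∈ ℂ, and with B * Σ = μ • (Σ * B) for some μ ∈ ℂ with μ² = 1. Let Y : ℂ → Matrix (Fin n) (Fin n) ℂ be such that Y(k) is invertible and (Y(k))⁻¹ = B * (Y(conj k))ᴴ * B⁻¹ for every k ∈ ℂ. Define S(k) = Σ * (Y(-k))⁻¹ * Σ * Y(k). Then for every k ∈ ℂ, (S(k))⁻¹ = B * (S(conj k))ᴴ * B⁻¹. -/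
/-!
With `θ X = B Xᴴ B⁻¹`, an anti-multiplicative map commuting with inversion, the hypotheses say
`θ (Y k̄) = (Y k)⁻¹` and `θ Σ = μ Σ`. Applying `θ` factor by factor to
`S(k̄) = Σ Y(-k̄)⁻¹ Σ Y(k̄)` gives `μ² Y(k)⁻¹ Σ (Y(-k)⁻¹)⁻¹ Σ`, which is `S(k)⁻¹` because
`Σ⁻¹ = Σ` and `μ² = 1`.
-/

open Matrix

namespace Matrix

variable {m R : Type*} [Fintype m] [DecidableEq m] [CommRing R] [StarRing R]

noncomputable def twistConjTranspose (B X : Matrix m m R) : Matrix m m R := B * Xᴴ * B⁻¹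

variable {B : Matrix m m R}

theorem twistConjTranspose_mul (hB : IsUnit B) (X Z : Matrix m m R) :
    twistConjTranspose B (X * Z) = twistConjTranspose B Z * twistConjTranspose B X := by
  have hBinv : B⁻¹ * B = 1 := nonsing_inv_mul B ((isUnit_iff_isUnit_det B).mp hB)
  simp only [twistConjTranspose, conjTranspose_mul, Matrix.mul_assoc]
  rw [← Matrix.mul_assoc B⁻¹ B, hBinv, Matrix.one_mul]

theorem twistConjTranspose_inv (hB : IsUnit B) (X : Matrix m m R) :
    twistConjTranspose B X⁻¹ = (twistConjTranspose B X)⁻¹ := by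
  rw [twistConjTranspose, twistConjTranspose, mul_inv_rev, mul_inv_rev,
    nonsing_inv_nonsing_inv B ((isUnit_iff_isUnit_det B).mp hB), conjTranspose_nonsing_inv,
    Matrix.mul_assoc]

theorem twistConjTranspose_eq_smul_of_mul_eq_smul_mul (hB : IsUnit B) {Sig : Matrix m m R}
    (hSigH : Sigᴴ = Sig) {μ : R} (hBSig : B * Sig = μ • (Sig * B)) :
    twistConjTranspose B Sig = μ • Sig := by
  have hBinv : B * B⁻¹ = 1 := mul_nonsing_inv B ((isUnit_iff_isUnit_det B).mp hB)
  rw [twistConjTranspose, hSigH, hBSig, Matrix.smul_mul, Matrix.mul_assoc, hBinv,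
    Matrix.mul_one]

end Matrix

theorem scattering_symmetry_reduction_lift_general
    (n : ℕ)
    (Sig : Matrix (Fin n) (Fin n) ℂ) (hSig : Sig * Sig = 1) (hSigH : Sigᴴ = Sig)
    (B : Matrix (Fin n) (Fin n) ℂ) (hB : IsUnit B)
    (μ : ℂ) (hμ : μ ^ 2 = 1) (hBSig : B * Sig = μ • (Sig * B))
    (Y : ℂ → Matrix (Fin n) (Fin n) ℂ)
    (hYsym : ∀ k : ℂ, (Y k)⁻¹ = B * (Y (starRingEnd ℂ k))ᴴ * B⁻¹)
    (S : ℂ → Matrix (Fin n) (Fin n) ℂ)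
    (hS : ∀ k : ℂ, S k = Sig * (Y (-k))⁻¹ * Sig * Y k) :
    ∀ k : ℂ, (S k)⁻¹ = B * (S (starRingEnd ℂ k))ᴴ * B⁻¹ := by
  intro k
  have hSigInv : Sig⁻¹ = Sig := inv_eq_left_inv hSig
  have hθSig := twistConjTranspose_eq_smul_of_mul_eq_smul_mul hB hSigH hBSig
  have hθY : twistConjTranspose B (Y (starRingEnd ℂ k)) = (Y k)⁻¹ := (hYsym k).symm
  have hθY_neg : twistConjTranspose B (Y (-starRingEnd ℂ k)) = (Y (-k))⁻¹ := by
    rw [hYsym, map_neg]; rfl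
  change _ = twistConjTranspose B _
  rw [hS, hS, twistConjTranspose_mul hB, twistConjTranspose_mul hB, twistConjTranspose_mul hB,
    twistConjTranspose_inv hB, hθSig, hθY, hθY_neg, Matrix.mul_inv_rev, Matrix.mul_inv_rev,
    Matrix.mul_inv_rev, hSigInv]
  simp only [Matrix.mul_smul, Matrix.smul_mul, smul_smul, ← sq, hμ, one_smul]

/-- Lifting of the half-line Z₂-reduction symmetry to the full-line scattering
matrix S(k) = Σ Y(-k)⁻¹ Σ Y(k): it satisfies S(k)⁻¹ = B S(k̄)ᴴ B⁻¹. -/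
theorem scattering_symmetry_reduction_lift
    (n : ℕ) (hn : 1 ≤ n)
    (Sig : Matrix (Fin n) (Fin n) ℂ) (hSig : Sig * Sig = 1) (hSigH : Sigᴴ = Sig)
    (B : Matrix (Fin n) (Fin n) ℂ) (hB : IsUnit B)
    (b : ℂ) (hb : b ≠ 0) (hBH : Bᴴ = b • B)
    (μ : ℂ) (hμ : μ ^ 2 = 1) (hBSig : B * Sig = μ • (Sig * B))
    (Y : ℂ → Matrix (Fin n) (Fin n) ℂ)
    (hY : ∀ k : ℂ, IsUnit (Y k))
    (hYsym : ∀ k : ℂ, (Y k)⁻¹ = B * (Y (starRingEnd ℂ k))ᴴ * B⁻¹)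
    (S : ℂ → Matrix (Fin n) (Fin n) ℂ)
    (hS : ∀ k : ℂ, S k = Sig * (Y (-k))⁻¹ * Sig * Y k) :
    ∀ k : ℂ, (S k)⁻¹ = B * (S (starRingEnd ℂ k))ᴴ * B⁻¹ :=
  scattering_symmetry_reduction_lift_general n Sig hSig hSigH B hB μ hμ hBSig Y hYsym S hS
end

section
/- Let ρ⁺, ρ⁻ be nonzero real numbers, μ ∈ {1, -1}, and let B be the 4 × 4 diagonal complex matrix with diagonal entries (ρ⁺, μρ⁺, ρ⁻, μρ⁻). Let Σ be the 4 × 4 matrix whose only nonzero entries are Σ₀₁ = Σ₁₀ = Σ₂₃ = Σ₃₂ = 1. Let S : ℂ → Matrix (Fin 4) (Fin 4) ℂ satisfy, for all k ∈ ℂ: (i) S(k)ᵢⱼ = 0 whenever i and j have different parity; (ii) S(k)₀₀ S(k)₂₂ - S(k)₀₂ S(k)₂₀ = 1 and S(k)₁₁ S(k)₃₃ - S(k)₁₃ S(k)₃₁ = 1; (iii) S(k) * (Σ * S(-k) * Σ) = 1; (iv) S(k) * (B * (S(conj k))ᴴ * B⁻¹) = 1. Then, writing a(k) = S(k)₂₂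 and b(k) = S(k)₀₂, for all k ∈ ℂ: S(k)₀₀ = conj(a(conj k)), S(k)₁₁ = a(-k), S(k)₃₃ = conj(a(-conj k)), S(k)₁₃ = -b(-k), S(k)₂₀ = -(ρ⁻/ρ⁺) · conj(b(conj k)), and S(k)₃₁ = (ρ⁻/ρ⁺) · conj(b(-conj k)). -/
/-!
The sparsity pattern makes `S k` block diagonal for the splitting of the indices into `{0, 2}`
and `{1, 3}`. Restricted to a block, each symmetry says that a `2 × 2` matrix of determinant one
has an explicit right inverse, which must therefore be its adjugate. Reading off entries expresses
the odd block at `-k`, and both blocks at `conj k`, through the even block at `k`.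
-/

open Matrix

namespace Matrix

theorem eq_adjugate_of_mul_eq_one {n R : Type*} [Fintype n] [DecidableEq n] [CommRing R]
    {A X : Matrix n n R} (hdet : A.det = 1) (h : A * X = 1) : X = A.adjugate :=
  calc X = (A.adjugate * A) * X := by rw [adjugate_mul, hdet, one_smul, Matrix.one_mul]
    _ = A.adjugate := by rw [Matrix.mul_assoc, h, Matrix.mul_one]

theorem submatrix_mul_of_apply_eq_zero {l m n o p q R : Type*} [Fintype n] [Fintype o]
    [NonUnitalNonAssocSemiring R] (M : Matrix l n R) (N : Matrix n p R) {r : m → l}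
    {e : o → n} {c : q → p} (he : Function.Injective e)
    (hM : ∀ i j, (∀ a, e a ≠ j) → M (r i) j = 0) :
    (M * N).submatrix r c = M.submatrix r e * N.submatrix e c := by
  ext i j
  simp only [submatrix_apply, mul_apply]
  refine (Fintype.sum_of_injective e he _ _ (fun b hb => ?_) fun _ => rfl).symm
  rw [hM i b fun a ha => hb ⟨a, ha⟩, zero_mul]

theorem submatrix_eq_adjugate_of_mul_eq_one {m n R : Type*} [Fintype m] [DecidableEq m]
    [Fintype n] [DecidableEq n] [CommRing R] {M T : Matrix n n R} {e : m → n}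
    (he : Function.Injective e) (hM : ∀ i j, (∀ a, e a ≠ j) → M (e i) j = 0)
    (hdet : (M.submatrix e e).det = 1) (h : M * T = 1) :
    T.submatrix e e = (M.submatrix e e).adjugate :=
  eq_adjugate_of_mul_eq_one hdet <| by
    rw [← submatrix_mul_of_apply_eq_zero M T he hM, h, submatrix_one e he]

theorem diagonal_mul_conjTranspose_mul_inv_apply {n K : Type*} [Fintype n] [DecidableEq n]
    [Field K] [StarRing K] {d : n → K} (hd : ∀ i, d i ≠ 0) (X : Matrix n n K) (i j : n) :
    (diagonal d * Xᴴ * (diagonal d)⁻¹) i j = d i * star (X j i) / d j := by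
  have hinv : (diagonal d)⁻¹ = diagonal fun i => (d i)⁻¹ :=
    inv_eq_left_inv (by rw [diagonal_mul_diagonal]; simp [hd])
  rw [hinv, mul_diagonal, diagonal_mul, conjTranspose_apply, div_eq_mul_inv]

theorem swapPairs_conj_submatrix {R : Type*} [NonAssocSemiring R]
    (X : Matrix (Fin 4) (Fin 4) R) :
    (!![0, 1, 0, 0; 1, 0, 0, 0; 0, 0, 0, 1; 0, 0, 1, 0] * X *
        !![0, 1, 0, 0; 1, 0, 0, 0; 0, 0, 0, 1; 0, 0, 1, 0]).submatrix ![0, 2] ![0, 2] =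
      X.submatrix ![1, 3] ![1, 3] := by
  ext i j
  fin_cases i <;> fin_cases j <;> simp [vecHead, vecTail, vecMul, dotProduct, Fin.sum_univ_four]

def IsParityBlockDiagonal {R : Type*} [Zero R] (M : Matrix (Fin 4) (Fin 4) R) : Prop :=
  ∀ i j : Fin 4, (i : ℕ) % 2 ≠ (j : ℕ) % 2 → M i j = 0

section ParityBlocks

variable {R : Type*} [CommRing R] {M T : Matrix (Fin 4) (Fin 4) R}

theorem IsParityBlockDiagonal.evenBlock_eq_of_mul_eq_one (hM : M.IsParityBlockDiagonal)
    (hdet : M 0 0 * M 2 2 - M 0 2 * M 2 0 = 1) (h : M * T = 1) :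
    T.submatrix ![0, 2] ![0, 2] = !![M 2 2, -M 0 2; -M 2 0, M 0 0] := by
  rw [submatrix_eq_adjugate_of_mul_eq_one (by decide)
    (fun i j hj => hM _ _ (by revert i j; decide)) (by rw [det_fin_two]; simpa using hdet) h,
    adjugate_fin_two]
  simp

theorem IsParityBlockDiagonal.oddBlock_eq_of_mul_eq_one (hM : M.IsParityBlockDiagonal)
    (hdet : M 1 1 * M 3 3 - M 1 3 * M 3 1 = 1) (h : M * T = 1) :
    T.submatrix ![1, 3] ![1, 3] = !![M 3 3, -M 1 3; -M 3 1, M 1 1] := by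
  rw [submatrix_eq_adjugate_of_mul_eq_one (by decide)
    (fun i j hj => hM _ _ (by revert i j; decide)) (by rw [det_fin_two]; simpa using hdet) h,
    adjugate_fin_two]
  simp

theorem IsParityBlockDiagonal.entries_of_mul_swapPairs_conj_eq_one {N : Matrix (Fin 4) (Fin 4) R}
    (hM : M.IsParityBlockDiagonal) (hdet : M 0 0 * M 2 2 - M 0 2 * M 2 0 = 1)
    (h : M * (!![0, 1, 0, 0; 1, 0, 0, 0; 0, 0, 0, 1; 0, 0, 1, 0] * N *
      !![0, 1, 0, 0; 1, 0, 0, 0; 0, 0, 0, 1; 0, 0, 1, 0]) = 1) :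
    N 1 1 = M 2 2 ∧ N 1 3 = -M 0 2 ∧ N 3 3 = M 0 0 := by
  have hblock := hM.evenBlock_eq_of_mul_eq_one hdet h
  rw [swapPairs_conj_submatrix, ← Matrix.ext_iff] at hblock
  exact ⟨hblock 0 0, hblock 0 1, hblock 1 1⟩

theorem IsParityBlockDiagonal.entries_of_mul_diagonal_conjTranspose_conj_eq_one {K : Type*}
    [Field K] [StarRing K] {M N : Matrix (Fin 4) (Fin 4) K} {p q c : K} (hp : p ≠ 0)
    (hq : q ≠ 0) (hc : c ≠ 0) (hM : M.IsParityBlockDiagonal)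
    (hdetEven : M 0 0 * M 2 2 - M 0 2 * M 2 0 = 1)
    (hdetOdd : M 1 1 * M 3 3 - M 1 3 * M 3 1 = 1)
    (h : M * (diagonal ![p, c * p, q, c * q] * Nᴴ * (diagonal ![p, c * p, q, c * q])⁻¹) = 1) :
    M 0 0 = starRingEnd K (N 2 2) ∧ q * starRingEnd K (N 0 2) / p = -M 2 0 ∧
      q * starRingEnd K (N 1 3) / p = -M 3 1 := by
  simp only [starRingEnd_apply]
  have hd : ∀ i, ![p, c * p, q, c * q] i ≠ 0 := by
    intro i; fin_cases i <;> simp [hp, hq, hc]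
  have hEven := hM.evenBlock_eq_of_mul_eq_one hdetEven h
  have hOdd := hM.oddBlock_eq_of_mul_eq_one hdetOdd h
  rw [← Matrix.ext_iff] at hEven hOdd
  have h22 : q * star (N 2 2) / q = M 0 0 := by
    simpa [diagonal_mul_conjTranspose_mul_inv_apply hd] using hEven 1 1
  have h20 : q * star (N 0 2) / p = -M 2 0 := by
    simpa [diagonal_mul_conjTranspose_mul_inv_apply hd] using hEven 1 0
  have h31 : c * q * star (N 1 3) / (c * p) = -M 3 1 := by
    simpa [diagonal_mul_conjTranspose_mul_inv_apply hd] using hOdd 1 0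
  rw [mul_div_cancel_left₀ _ hq] at h22
  refine ⟨h22.symm, h20, ?_⟩
  rw [← h31, mul_assoc c, mul_div_mul_left _ _ hc]

end ParityBlocks

end Matrix

/-- γ = 1 case of the final proposition: under the diagonal Z₂ reduction (NLS
case) the 4×4 full-line scattering matrix reduces to the two coefficients
a(k) = S(k)₂₂ and b(k) = S(k)₀₂ with the standard NLS symmetry pattern. -/
theorem nls_scattering_reduction
    (ρp ρm : ℝ) (hρp : ρp ≠ 0) (hρm : ρm ≠ 0)
    (μ : ℂ) (hμ : μ = 1 ∨ μ = -1)
    (B Sig : Matrix (Fin 4) (Fin 4) ℂ)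
    (hB : B = Matrix.diagonal ![(ρp : ℂ), μ * (ρp : ℂ), (ρm : ℂ), μ * (ρm : ℂ)])
    (hSig : Sig = !![0, 1, 0, 0; 1, 0, 0, 0; 0, 0, 0, 1; 0, 0, 1, 0])
    (S : ℂ → Matrix (Fin 4) (Fin 4) ℂ)
    (hsparse : ∀ (k : ℂ) (i j : Fin 4), (i : ℕ) % 2 ≠ (j : ℕ) % 2 → S k i j = 0)
    (hdet1 : ∀ k : ℂ, S k 0 0 * S k 2 2 - S k 0 2 * S k 2 0 = 1)
    (hdet2 : ∀ k : ℂ, S k 1 1 * S k 3 3 - S k 1 3 * S k 3 1 = 1)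
    (hsym1 : ∀ k : ℂ, S k * (Sig * S (-k) * Sig) = 1)
    (hsym2 : ∀ k : ℂ, S k * (B * (S (starRingEnd ℂ k))ᴴ * B⁻¹) = 1) :
    ∀ k : ℂ,
      S k 0 0 = starRingEnd ℂ (S (starRingEnd ℂ k) 2 2)
        ∧ S k 1 1 = S (-k) 2 2
        ∧ S k 3 3 = starRingEnd ℂ (S (-(starRingEnd ℂ k)) 2 2)
        ∧ S k 1 3 = -(S (-k) 0 2)
        ∧ S k 2 0 = -(((ρm / ρp : ℝ) : ℂ) * starRingEnd ℂ (S (starRingEnd ℂ k) 0 2))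
        ∧ S k 3 1 = ((ρm / ρp : ℝ) : ℂ) * starRingEnd ℂ (S (-(starRingEnd ℂ k)) 0 2) := by
  subst hB hSig
  have hμ0 : μ ≠ 0 := by rcases hμ with rfl | rfl <;> norm_num
  have hneg (k : ℂ) := IsParityBlockDiagonal.entries_of_mul_swapPairs_conj_eq_one (hsparse (-k))
    (hdet1 (-k)) (by simpa only [neg_neg] using hsym1 (-k))
  have hconj (k : ℂ) := IsParityBlockDiagonal.entries_of_mul_diagonal_conjTranspose_conj_eq_one
    (Complex.ofReal_ne_zero.2 hρp) (Complex.ofReal_ne_zero.2 hρm) hμ0 (hsparse k) (hdet1 k)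
    (hdet2 k) (hsym2 k)
  intro k
  obtain ⟨h00, h20, h31⟩ := hconj k
  refine ⟨h00, (hneg k).1, ?_, (hneg k).2.1, ?_, ?_⟩
  · rw [(hneg k).2.2, (hconj (-k)).1, map_neg]
  · push_cast
    linear_combination h20
  · rw [(hneg _).2.1, map_neg] at h31
    push_cast
    linear_combination h31
end
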